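/- arXiv:1211.4535 — 2 statements merged into one kernel-verified Lean document; each statement's English description precedes it below -/
import Mathlib

section
/- For a bounded subset X of ℂ, the set X̂ is closed and full, i.e., the complement ℂ \ X̂ has no bounded connected components. -/
open Set Topology Bornology Filter Metric

noncomputable section

/-- The "hat" of a bounded set: its closure together with all bounded connected
components of the complement of its closure. -/
def hat (X : Set ℂ) : Set ℂ :=
  closure X ∪ {z | z ∉ closure X ∧ IsBounded (connectedComponentIn (closure X)ᶜ z)}

/-- The ω-limit set of the orbit of `x` under `f`. -/
def omegaSet (f : ℂ → ℂ) (x : ℂ) : Set ℂ :=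
  {y | MapClusterPt y atTop fun n => f^[n] x}

/-- `v` is a singular value of `f`: on no open neighborhood of `v` are all branches of
the inverse well defined and univalent. -/
def IsSingularValue (f : ℂ → ℂ) (v : ℂ) : Prop :=
  ∀ V : Set ℂ, IsOpen V → v ∈ V →
    ∃ x ∈ f ⁻¹' V, ¬ (Set.InjOn f (connectedComponentIn (f ⁻¹' V) x) ∧
      f '' connectedComponentIn (f ⁻¹' V) x = V)

/-- The Fatou set: points near which the family of iterates is normal (equicontinuous). -/
def fatouSet (f : ℂ → ℂ) : Set ℂ :=
  {z | ∃ U ∈ 𝓝 z, IsOpen U ∧ EquicontinuousOn (fun n : ℕ => f^[n]) U}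

/-- `φ` is a biholomorphism from `A` onto `B`. -/
def Biholo (φ : ℂ → ℂ) (A B : Set ℂ) : Prop :=
  DifferentiableOn ℂ φ A ∧ Set.InjOn φ A ∧ φ '' A = B

/-- `Δ` is a forward invariant Siegel disk of `f` with rotation number `θ`. -/
def IsSiegelDisk (f : ℂ → ℂ) (Δ : Set ℂ) (θ : ℝ) : Prop :=
  IsOpen Δ ∧ IsConnected Δ ∧ f '' Δ = Δ ∧ Δ ⊆ fatouSet f ∧ Irrational θ ∧
  ∃ φ : ℂ → ℂ, Biholo φ (Metric.ball 0 1) Δ ∧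
    ∀ z ∈ Metric.ball (0:ℂ) 1,
      f (φ z) = φ (Complex.exp (2 * Real.pi * θ * Complex.I) * z)

/-- `U` is a connected component of the Fatou set of `f`. -/
def IsFatouComponent (f : ℂ → ℂ) (U : Set ℂ) : Prop :=
  ∃ z ∈ fatouSet f, U = connectedComponentIn (fatouSet f) z

/-- A periodic Fatou component. -/
def IsPeriodicFatouComponent (f : ℂ → ℂ) (U : Set ℂ) : Prop :=
  IsFatouComponent f U ∧ ∃ n : ℕ, 0 < n ∧ f^[n] '' U ⊆ U

/-- The Separation Property: closures of any two distinct periodic Fatou components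
intersect in at most one point. -/
def SeparationProperty (f : ℂ → ℂ) : Prop :=
  ∀ U V : Set ℂ, IsPeriodicFatouComponent f U → IsPeriodicFatouComponent f V →
    U ≠ V → (closure U ∩ closure V).Subsingleton

/-- A wandering domain: a Fatou component whose forward images lie in pairwise
distinct Fatou components. -/
def IsWanderingDomain (f : ℂ → ℂ) (U : Set ℂ) : Prop :=
  IsFatouComponent f U ∧
  ∀ m n : ℕ, m < n → ∀ z ∈ U,
    connectedComponentIn (fatouSet f) (f^[m] z) ≠ connectedComponentIn (fatouSet f) (f^[n] z)

/-- Only the finite set `S` of singular values interacts with the Siegel disk `Δ`. -/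
def InteractingSingularSet (f : ℂ → ℂ) (Δ : Set ℂ) (S : Set ℂ) : Prop :=
  S.Finite ∧ S ⊆ {v | IsSingularValue f v} ∧
  (∀ s ∈ S, (omegaSet f s ∩ hat Δ).Nonempty) ∧
  closure (⋃ s ∈ {v | IsSingularValue f v} \ S, omegaSet f s) ∩ hat Δ = ∅ ∧
  closure ({v | IsSingularValue f v} \ S) ∩ frontier Δ = ∅

/-- `θ` is a Herman number: every analytic orientation preserving circle diffeomorphism
(given by its lift) with rotation number `θ` is analytically linearizable. -/
def IsHermanNumber (θ : ℝ) : Prop :=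
  ∀ F : ℝ → ℝ, AnalyticOnNhd ℝ F Set.univ → StrictMono F →
    (∀ x, F (x + 1) = F x + 1) → (∀ x, 0 < deriv F x) →
    (∀ x : ℝ, Filter.Tendsto (fun n : ℕ => (F^[n] x - x) / n) Filter.atTop (nhds θ)) →
    ∃ H : ℝ → ℝ, AnalyticOnNhd ℝ H Set.univ ∧ StrictMono H ∧
      (∀ x, H (x + 1) = H x + 1) ∧ ∀ x, H (F x) = H x + θ

/-- `f` restricted to `U` is a holomorphic covering of `V`. -/
def IsHolCoveringOn (f : ℂ → ℂ) (U V : Set ℂ) : Prop :=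
  DifferentiableOn ℂ f U ∧ f '' U = V ∧
  ∀ v ∈ V, ∃ W, IsOpen W ∧ v ∈ W ∧ W ⊆ V ∧
    ∀ x ∈ U ∩ f ⁻¹' W, Set.BijOn f (connectedComponentIn (U ∩ f ⁻¹' W) x) W

/-- `X̂` is closed and full. -/
theorem stmt1 (X : Set ℂ) (hX : IsBounded X) :
    IsClosed (hat X) ∧ ∀ z ∉ hat X, ¬ IsBounded (connectedComponentIn (hat X)ᶜ z) := by
  set C := closure X with hC
  -- key: if z ∉ hat X then the component of z in Cᶜ is disjoint from hat X
  have key : ∀ z ∉ hat X, connectedComponentIn Cᶜ z ⊆ (hat X)ᶜ := by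
    intro z hz w hw
    have hzC : z ∉ C := fun h => hz (Or.inl h)
    have hzb : ¬ IsBounded (connectedComponentIn Cᶜ z) := by
      intro hb; exact hz (Or.inr ⟨hzC, hb⟩)
    have hwC : w ∉ C := (connectedComponentIn_subset _ _ hw)
    have heq : connectedComponentIn Cᶜ w = connectedComponentIn Cᶜ z :=
      (connectedComponentIn_eq hw).symm
    intro hwhat
    rcases hwhat with h | ⟨_, hb⟩
    · exact hwC h
    · exact hzb (heq ▸ hb)
  have hnot : ∀ z ∉ hat X, z ∈ Cᶜ := fun z hz h => hz (Or.inl h)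
  constructor
  · rw [← isOpen_compl_iff]
    rw [isOpen_iff_mem_nhds]
    intro z hz
    have hzC : z ∈ Cᶜ := hnot z hz
    have hopen : IsOpen (connectedComponentIn Cᶜ z) :=
      IsOpen.connectedComponentIn isClosed_closure.isOpen_compl
    exact Filter.mem_of_superset (hopen.mem_nhds (mem_connectedComponentIn hzC))
      (key z hz)
  · intro z hz hb
    have hzC : z ∈ Cᶜ := hnot z hz
    have hsub : connectedComponentIn Cᶜ z ⊆ connectedComponentIn (hat X)ᶜ z :=
      (isPreconnected_connectedComponentIn).subset_connectedComponentIn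
        (mem_connectedComponentIn hzC) (key z hz)
    have hzb : ¬ IsBounded (connectedComponentIn Cᶜ z) := by
      intro hbb
      exact hz (Or.inr ⟨fun h => hzC h, hbb⟩)
    exact hzb (hb.subset hsub)
end
end

section
/- Let f be an entire function and Δ a bounded forward invariant Siegel disk of f. Then every bounded connected component H of ℂ \ closure(Δ) (a 'hidden component') is contained in the Fatou set of f, and f(H) is contained in Δ̂. In particular Δ̂ is forward invariant under f. -/
open Set Topology Bornology Filter Metric

noncomputable section

/-
The iterates of `f` map `closure Δ` into itself, and the frontier of a hidden component `H` lies in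
`closure Δ`, so by the maximum principle the iterates are bounded on `H` by a bound for
`closure Δ`; the Cauchy estimates make a uniformly bounded family of holomorphic maps
equicontinuous. For the image: `f` is nonconstant, as it maps the open set `Δ` onto itself, hence
an open map, so `f '' H` is open, while `f '' closure H` is compact and
`f '' frontier H ⊆ closure Δ`. Hence the component of `(closure Δ)ᶜ` containing a
point of `f '' H` is trapped in `f '' H`, and is bounded.
-/

theorem IsOpen.frontier_connectedComponentIn_subset_compl {X : Type*} [TopologicalSpace X]
    [LocallyConnectedSpace X] {U : Set X} (hU : IsOpen U) (x : X) :
    frontier (connectedComponentIn U x) ⊆ Uᶜ := by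
  rintro y ⟨hy_cl, hy_int⟩ hyU
  obtain ⟨w, hwy, hwx⟩ := mem_closure_iff.mp hy_cl _ hU.connectedComponentIn
    (mem_connectedComponentIn hyU)
  have hy : y ∈ connectedComponentIn U x := by
    rw [connectedComponentIn_eq hwx, ← connectedComponentIn_eq hwy]
    exact mem_connectedComponentIn hyU
  exact hy_int (hU.connectedComponentIn.interior_eq.symm ▸ hy)

theorem IsClosed.frontier_connectedComponentIn_compl_subset {X : Type*} [TopologicalSpace X]
    [LocallyConnectedSpace X] {K : Set X} (hK : IsClosed K) (x : X) :
    frontier (connectedComponentIn Kᶜ x) ⊆ K := by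
  simpa using hK.isOpen_compl.frontier_connectedComponentIn_subset_compl x

theorem IsPreconnected.subset_image_of_mapsTo_frontier {X Y : Type*} [TopologicalSpace X]
    [TopologicalSpace Y] [T2Space Y] {f : X → Y} {H : Set X} {K C : Set Y}
    (hf : Continuous f) (hfH : IsOpen (f '' H)) (hH : IsCompact (closure H))
    (hfr : MapsTo f (frontier H) K)
    (hC : IsPreconnected C) (hCK : Disjoint C K) (hCH : (C ∩ f '' H).Nonempty) :
    C ⊆ f '' H := by
  refine hC.subset_of_closure_inter_subset hfH hCH ?_
  rintro _ ⟨hcl, hc⟩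
  have hclosed : IsClosed (f '' closure H) := (hH.image hf).isClosed
  obtain ⟨y, hy, rfl⟩ := closure_minimal (image_mono subset_closure) hclosed hcl
  by_contra hyH
  have hy_fr : y ∈ frontier H := ⟨hy, fun h => hyH ⟨y, interior_subset h, rfl⟩⟩
  exact hCK.ne_of_mem hc (hfr hy_fr) rfl

theorem equicontinuousOn_of_differentiableOn_of_norm_le {ι : Type*} {F : ι → ℂ → ℂ}
    {U : Set ℂ} {M : ℝ} (hU : IsOpen U) (hF : ∀ i, DifferentiableOn ℂ (F i) U)
    (hM : ∀ i, ∀ z ∈ U, ‖F i z‖ ≤ M) : EquicontinuousOn F U := by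
  intro x hx
  obtain ⟨r, hr, hrU⟩ := nhds_basis_closedBall.mem_iff.mp (hU.mem_nhds hx)
  have hr2 : 0 < r / 2 := half_pos hr
  have hderiv : ∀ i, ∀ w ∈ ball x (r / 2), ‖deriv (F i) w‖ ≤ M / (r / 2) := by
    intro i w hw
    have hw_ball : closedBall w (r / 2) ⊆ closedBall x r :=
      closedBall_subset_closedBall' (by rw [mem_ball] at hw; linarith)
    exact Complex.norm_deriv_le_of_forall_mem_sphere_norm_le hr2
      ((hF i).diffContOnCl_ball (hw_ball.trans hrU))
      fun y hy => hM i y (hrU (hw_ball (sphere_subset_closedBall hy)))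
  have hlim : Tendsto (fun y => M / (r / 2) * dist x y) (𝓝 x) (𝓝 0) :=
    Continuous.tendsto' (by fun_prop) x 0 (by simp)
  refine (equicontinuousAt_of_continuity_modulus _ hlim F ?_).equicontinuousWithinAt U
  filter_upwards [ball_mem_nhds x hr2] with y hy i
  have hball : ball x (r / 2) ⊆ U :=
    (ball_subset_ball (half_le_self hr.le)).trans (ball_subset_closedBall.trans hrU)
  rw [dist_eq_norm, dist_eq_norm]
  exact (convex_ball x (r / 2)).norm_image_sub_le_of_norm_deriv_le
    (fun w hw => (hF i).differentiableAt (hU.mem_nhds (hball hw))) (hderiv i) hy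
    (mem_ball_self hr2)

section HiddenComponents

variable {f : ℂ → ℂ} {Δ : Set ℂ} {z : ℂ}

theorem connectedComponentIn_compl_closure_subset_fatouSet (hf : Differentiable ℂ f)
    (hΔ : MapsTo f Δ Δ) (hb : IsBounded Δ)
    (hH : IsBounded (connectedComponentIn (closure Δ)ᶜ z)) :
    connectedComponentIn (closure Δ)ᶜ z ⊆ fatouSet f := by
  set H := connectedComponentIn (closure Δ)ᶜ z
  have hH_open : IsOpen H := isClosed_closure.isOpen_compl.connectedComponentIn
  obtain ⟨M, hM⟩ := hb.closure.subset_closedBall 0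
  have hbound : ∀ n, ∀ w ∈ H, ‖f^[n] w‖ ≤ M := by
    intro n w hw
    refine Complex.norm_le_of_forall_mem_frontier_norm_le hH (hf.iterate n).diffContOnCl
      (fun y hy => ?_) (subset_closure hw)
    simpa using hM ((hΔ.iterate n).closure (hf.continuous.iterate n)
      (isClosed_closure.frontier_connectedComponentIn_compl_subset z hy))
  have hequi := equicontinuousOn_of_differentiableOn_of_norm_le hH_open
    (fun n => (hf.iterate n).differentiableOn) hbound
  exact fun x hx => ⟨H, hH_open.mem_nhds hx, hH_open, hequi⟩

theorem image_connectedComponentIn_compl_closure_subset_hat (hf : Continuous f)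
    (hf_open : IsOpenMap f) (hΔ : MapsTo f Δ Δ)
    (hH : IsBounded (connectedComponentIn (closure Δ)ᶜ z)) :
    f '' connectedComponentIn (closure Δ)ᶜ z ⊆ hat Δ := by
  rintro _ ⟨x, hx, rfl⟩
  by_cases hfx : f x ∈ closure Δ
  · exact Or.inl hfx
  refine Or.inr ⟨hfx, ?_⟩
  have hH_compact := hH.isCompact_closure
  have hC := isPreconnected_connectedComponentIn.subset_image_of_mapsTo_frontier hf
    (hf_open _ isClosed_closure.isOpen_compl.connectedComponentIn) hH_compact
    (fun y hy =>
      hΔ.closure hf (isClosed_closure.frontier_connectedComponentIn_compl_subset z hy))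
    (subset_compl_iff_disjoint_right.mp (connectedComponentIn_subset _ _))
    ⟨f x, mem_connectedComponentIn hfx, mem_image_of_mem f hx⟩
  exact (hH_compact.image hf).isBounded.subset (hC.trans (image_mono subset_closure))

theorem mapsTo_hat (hf : Continuous f) (hf_open : IsOpenMap f) (hΔ : MapsTo f Δ Δ) :
    MapsTo f (hat Δ) (hat Δ) := by
  rintro x (hx | ⟨hx, hH⟩)
  · exact Or.inl (hΔ.closure hf hx)
  · exact image_connectedComponentIn_compl_closure_subset_hat hf hf_open hΔ hH
      (mem_image_of_mem f (mem_connectedComponentIn hx))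

end HiddenComponents

theorem IsSiegelDisk.isOpenMap {f : ℂ → ℂ} {Δ : Set ℂ} {θ : ℝ}
    (hf : Differentiable ℂ f) (hΔ : IsSiegelDisk f Δ θ) : IsOpenMap f := by
  obtain ⟨hΔ_open, hΔ_conn, hΔ_inv, -⟩ := hΔ
  refine (hf.differentiableOn.analyticOnNhd isOpen_univ).is_constant_or_isOpenMap.resolve_left ?_
  rintro ⟨w, hw⟩
  obtain ⟨x, hx⟩ := hΔ_conn.nonempty
  have hsub : Δ.Subsingleton := by
    rw [← hΔ_inv]
    rintro _ ⟨a, -, rfl⟩ _ ⟨b, -, rfl⟩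
    rw [hw a, hw b]
  exact not_isOpen_singleton x (hsub.eq_singleton_of_mem hx ▸ hΔ_open)

/-- hidden components are in the Fatou set and `Δ̂` is forward invariant. -/
theorem stmt6 (f : ℂ → ℂ) (hf : Differentiable ℂ f) (Δ : Set ℂ) (θ : ℝ)
    (hΔ : IsSiegelDisk f Δ θ) (hb : IsBounded Δ) :
    (∀ z, z ∉ closure Δ → IsBounded (connectedComponentIn (closure Δ)ᶜ z) →
      connectedComponentIn (closure Δ)ᶜ z ⊆ fatouSet f ∧
      f '' connectedComponentIn (closure Δ)ᶜ z ⊆ hat Δ) ∧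
    f '' hat Δ ⊆ hat Δ := by
  have hΔ_inv : MapsTo f Δ Δ := (mapsTo_image f Δ).mono_right hΔ.2.2.1.subset
  have hf_open : IsOpenMap f := hΔ.isOpenMap hf
  refine ⟨fun z _ hH => ⟨?_, ?_⟩, (mapsTo_hat hf.continuous hf_open hΔ_inv).image_subset⟩
  · exact connectedComponentIn_compl_closure_subset_fatouSet hf hΔ_inv hb hH
  · exact image_connectedComponentIn_compl_closure_subset_hat hf.continuous hf_open hΔ_inv hH
end
end
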